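/- arXiv:1607.03092 — 9 statements merged into one kernel-verified Lean document; each statement's English description precedes it below -/
import Mathlib

section
/- The function g̃ is convex on ℝ. (More precisely, its second derivative g̃''(x) = 3a(x−x̃)² + 2b(x−x̃) + c + max(b²/(3a) − c, 0) is nonnegative for every x ∈ ℝ.) -/
/-! With `y = x - x̃`, the second derivative of `g̃` is `3a y² + 2b y + (c + c̃)`, and the choice of
`c̃` gives `c + c̃ ≥ b² / (3a)`, so this quadratic has nonpositive discriminant. -/

open Set

theorem convexOn_univ_of_hasDerivAt2_nonneg {f f' f'' : ℝ → ℝ}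
    (hf' : ∀ x, HasDerivAt f (f' x) x) (hf'' : ∀ x, HasDerivAt f' (f'' x) x)
    (hf''₀ : ∀ x, 0 ≤ f'' x) : ConvexOn ℝ univ f :=
  convexOn_of_hasDerivWithinAt2_nonneg convex_univ
    (fun x _ => (hf' x).continuousAt.continuousWithinAt)
    (fun x _ => (hf' x).hasDerivWithinAt) (fun x _ => (hf'' x).hasDerivWithinAt)
    (fun x _ => hf''₀ x)

section Quartic

variable (a b e d x₀ : ℝ)

theorem hasDerivAt_quartic (x : ℝ) :
    HasDerivAt (fun x => a / 4 * (x - x₀) ^ 4 + b / 3 * (x - x₀) ^ 3 + e / 2 * (x - x₀) ^ 2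
      + d * (x - x₀))
      (a * (x - x₀) ^ 3 + b * (x - x₀) ^ 2 + e * (x - x₀) + d) x := by
  have hy : HasDerivAt (fun x : ℝ => x - x₀) 1 x := (hasDerivAt_id x).sub_const x₀
  refine (((((hy.pow 4).const_mul (a / 4)).add ((hy.pow 3).const_mul (b / 3))).add
    ((hy.pow 2).const_mul (e / 2))).add (hy.const_mul d)).congr_deriv ?_
  push_cast
  ring

theorem hasDerivAt_cubic (x : ℝ) :
    HasDerivAt (fun x => a * (x - x₀) ^ 3 + b * (x - x₀) ^ 2 + e * (x - x₀) + d)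
      (3 * a * (x - x₀) ^ 2 + 2 * b * (x - x₀) + e) x := by
  have hy : HasDerivAt (fun x : ℝ => x - x₀) 1 x := (hasDerivAt_id x).sub_const x₀
  refine (((((hy.pow 3).const_mul a).add ((hy.pow 2).const_mul b)).add
    (hy.const_mul e)).add_const d).congr_deriv ?_
  push_cast
  ring

variable {a b e}

theorem quadratic_nonneg_of_sq_le (ha : 0 < a) (hb : b ^ 2 ≤ 3 * a * e) (y : ℝ) :
    0 ≤ 3 * a * y ^ 2 + 2 * b * y + e := by
  have key : 3 * a * (3 * a * y ^ 2 + 2 * b * y + e) = (3 * a * y + b) ^ 2 + (3 * a * e - b ^ 2) := by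
    ring
  have hscaled : 0 ≤ 3 * a * (3 * a * y ^ 2 + 2 * b * y + e) := by
    rw [key]
    nlinarith [sq_nonneg (3 * a * y + b)]
  exact (mul_nonneg_iff_of_pos_left (by positivity)).mp hscaled

theorem convexOn_univ_quartic (ha : 0 < a) (hb : b ^ 2 ≤ 3 * a * e) :
    ConvexOn ℝ univ (fun x => a / 4 * (x - x₀) ^ 4 + b / 3 * (x - x₀) ^ 3
      + e / 2 * (x - x₀) ^ 2 + d * (x - x₀)) :=
  convexOn_univ_of_hasDerivAt2_nonneg (hasDerivAt_quartic a b e d x₀) (hasDerivAt_cubic a b e d x₀)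
    fun x => quadratic_nonneg_of_sq_le ha hb (x - x₀)

end Quartic

theorem stmt_0_general (xt c d : ℝ) (a b : ℝ) (ha : a = 4)
    (g : ℝ → ℝ)
    (hg : ∀ x, g x = (a / 4) * (x - xt) ^ 4 + (b / 3) * (x - xt) ^ 3
      + (c / 2) * (x - xt) ^ 2 + d * (x - xt))
    (ctil : ℝ) (hctil : ctil = max (b ^ 2 / (3 * a) - c) 0)
    (gtil : ℝ → ℝ) (hgtil : ∀ x, gtil x = g x + (ctil / 2) * (x - xt) ^ 2) :
    ConvexOn ℝ Set.univ gtil := by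
  have ha₀ : 0 < a := by rw [ha]; norm_num
  have hgtil_eq : gtil = fun x => a / 4 * (x - xt) ^ 4 + b / 3 * (x - xt) ^ 3
      + (c + ctil) / 2 * (x - xt) ^ 2 + d * (x - xt) := by
    funext x
    rw [hgtil, hg]
    ring
  have hb : b ^ 2 ≤ 3 * a * (c + ctil) := by
    have : b ^ 2 / (3 * a) ≤ c + ctil := by
      rw [hctil]
      linarith [le_max_left (b ^ 2 / (3 * a) - c) 0]
    rwa [div_le_iff₀ (by positivity), mul_comm] at this
  rw [hgtil_eq]
  exact convexOn_univ_quartic d xt ha₀ hb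

/-- With `a = 4`, `b = 12 * xt`, the regularized function
`g̃(x) = g(x) + (c̃/2)(x - x̃)²` is convex on ℝ. -/
theorem stmt_0 (xt c d : ℝ) (a b : ℝ) (ha : a = 4) (hb : b = 12 * xt)
    (g : ℝ → ℝ)
    (hg : ∀ x, g x = (a / 4) * (x - xt) ^ 4 + (b / 3) * (x - xt) ^ 3
      + (c / 2) * (x - xt) ^ 2 + d * (x - xt))
    (ctil : ℝ) (hctil : ctil = max (b ^ 2 / (3 * a) - c) 0)
    (gtil : ℝ → ℝ) (hgtil : ∀ x, gtil x = g x + (ctil / 2) * (x - xt) ^ 2) :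
    ConvexOn ℝ Set.univ gtil :=
  stmt_0_general xt c d a b ha g hg ctil hctil gtil hgtil
end

section
/- The minimization problem min { g̃(x) : x ≥ 0 } has a unique optimal solution; that is, there exists exactly one x* ≥ 0 such that g̃(x*) ≤ g̃(x) for all x ≥ 0. -/
/-!
Expanding around the origin instead of `x̃`, the choice `b = 3 a x̃` kills the cubic term:
`g̃ x = x⁴ + (m / 2) x² + e x + k` with `m = c + c̃ - b² / (3 a)`, and `c̃` is exactly the shift
making `m ≥ 0`. Then `g̃` is `x⁴` plus a convex function, hence strictly convex, and it is coercive.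
A minimiser over `[0, ∞)` exists by compactness and is unique by strict convexity.
-/

open Filter Set Polynomial

lemma Continuous.exists_isMinOn_Ici_of_tendsto_atTop {f : ℝ → ℝ} (hf : Continuous f)
    (htop : Tendsto f atTop atTop) (a : ℝ) : ∃ x ∈ Ici a, IsMinOn f (Ici a) x := by
  refine hf.continuousOn.exists_isMinOn' isClosed_Ici self_mem_Ici ?_
  rw [cocompact_eq_atBot_atTop, inf_sup_right, (disjoint_atBot_principal_Ici a).eq_bot,
    bot_sup_eq]
  exact (htop.eventually_ge_atTop (f a)).filter_mono inf_le_left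

lemma StrictConvexOn.existsUnique_isMinOn {s : Set ℝ} {f : ℝ → ℝ} (hf : StrictConvexOn ℝ s f)
    (h : ∃ x ∈ s, IsMinOn f s x) : ∃! x, x ∈ s ∧ IsMinOn f s x := by
  obtain ⟨x, hx, hmin⟩ := h
  exact ⟨x, ⟨hx, hmin⟩, fun y hy => hf.eq_of_isMinOn hy.2 hmin hy.1 hx⟩

lemma tendsto_quartic_atTop (m e k : ℝ) :
    Tendsto (fun x : ℝ => x ^ 4 + m * x ^ 2 + e * x + k) atTop atTop := by
  let P : ℝ[X] := X ^ 4 + C m * X ^ 2 + C e * X + C k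
  have hP : P.Monic := by simp only [P]; monicity!
  have hdeg : P.natDegree = 4 := by simp only [P]; compute_degree!
  simpa [P] using P.tendsto_atTop_of_leadingCoeff_nonneg
    (by simp [degree_eq_natDegree hP.ne_zero, hdeg]) (by simp [hP.leadingCoeff])

lemma strictConvexOn_quartic {m : ℝ} (hm : 0 ≤ m) (e k : ℝ) :
    StrictConvexOn ℝ univ (fun x : ℝ => x ^ 4 + m * x ^ 2 + e * x + k) :=
  (((Even.strictConvexOn_pow (n := 4) (by decide) (by decide)).add_convexOn
    ((Even.convexOn_pow (n := 2) (by decide)).smul hm)).add_convexOn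
    ((LinearMap.mul ℝ ℝ e).convexOn convex_univ)).add_const k

/-- the problem `min { g̃(x) : x ≥ 0 }` has a unique optimal solution:
there is exactly one `x* ≥ 0` with `g̃(x*) ≤ g̃(x)` for all `x ≥ 0`. -/
theorem stmt_2 (xt c d : ℝ) (a b : ℝ) (ha : a = 4) (hb : b = 12 * xt)
    (g : ℝ → ℝ)
    (hg : ∀ x, g x = (a / 4) * (x - xt) ^ 4 + (b / 3) * (x - xt) ^ 3
      + (c / 2) * (x - xt) ^ 2 + d * (x - xt))
    (ctil : ℝ) (hctil : ctil = max (b ^ 2 / (3 * a) - c) 0)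
    (gtil : ℝ → ℝ) (hgtil : ∀ x, gtil x = g x + (ctil / 2) * (x - xt) ^ 2) :
    ∃! xstar : ℝ, 0 ≤ xstar ∧ ∀ x : ℝ, 0 ≤ x → gtil xstar ≤ gtil x := by
  set K := c + ctil
  have hK : 12 * xt ^ 2 ≤ K := by
    have := hctil ▸ le_max_left (b ^ 2 / (3 * a) - c) 0
    rw [ha, hb] at this
    linarith
  have hform : gtil = fun x => x ^ 4 + (K / 2 - 6 * xt ^ 2) * x ^ 2
      + (8 * xt ^ 3 - K * xt + d) * x + (K / 2 * xt ^ 2 - 3 * xt ^ 4 - d * xt) := by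
    funext x
    rw [hgtil, hg, ha, hb]
    ring
  have hconv : StrictConvexOn ℝ (Ici 0) gtil := hform ▸
    (strictConvexOn_quartic (by linarith) _ _).subset (subset_univ _) (convex_Ici 0)
  have hexists : ∃ x ∈ Ici 0, IsMinOn gtil (Ici 0) x := by
    refine Continuous.exists_isMinOn_Ici_of_tendsto_atTop ?_ ?_ 0 <;> rw [hform]
    · fun_prop
    · exact tendsto_quartic_atTop _ _ _
  simpa only [isMinOn_iff, mem_Ici] using hconv.existsUnique_isMinOn hexists
end

section
/- Suppose c ≤ b²/(3a) (equivalently, c ≤ 12x̃²). Then the unique minimizer of g̃ over { x : x ≥ 0 } is x* = max( ∛(b³/(27a³) − d/a) + x̃ − b/(3a), 0 ) = max( ∛(x̃³ − d/4), 0 ), where ∛ denotes the real cube root. -/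
/-!
With `a = 4`, `b = 12 x̃` and `c ≤ b²/(3a)` the regularisation `c̃` exactly cancels the cubic and
quadratic terms, leaving `g̃ x = x⁴ - 4 k x + const` with `k = x̃³ - d/4`. On `x ≥ 0` this quartic is
minimised at `∛k` when `k > 0`, by `x⁴ - 4 s³ x + 3 s⁴ = (x - s)² ((x + s)² + 2 s²)`, and at `0`
when `k ≤ 0`, where `x⁴ - 4 k x > 0` for `x > 0`.
-/

/-- The real cube root: the unique real `y` with `y ^ 3 = x`. -/
noncomputable def cbrt (x : ℝ) : ℝ :=
  if 0 ≤ x then x ^ ((1 : ℝ) / 3) else -((-x) ^ ((1 : ℝ) / 3))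

lemma cbrt_pow_three (x : ℝ) : cbrt x ^ 3 = x := by
  have cube_rpow : ∀ y : ℝ, 0 ≤ y → (y ^ ((1 : ℝ) / 3)) ^ 3 = y := fun y hy => by
    rw [← Real.rpow_natCast, ← Real.rpow_mul hy]
    norm_num
  unfold cbrt
  split_ifs with h
  · exact cube_rpow x h
  · rw [Odd.neg_pow (by decide), cube_rpow (-x) (by linarith), neg_neg]

lemma pow_four_sub_mul_lt_of_ne {x s : ℝ} (hxs : x ≠ s) :
    s ^ 4 - 4 * s ^ 3 * s < x ^ 4 - 4 * s ^ 3 * x := by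
  have hfactor : x ^ 4 - 4 * s ^ 3 * x - (s ^ 4 - 4 * s ^ 3 * s)
      = (x - s) ^ 2 * ((x + s) ^ 2 + 2 * s ^ 2) := by ring
  have hsq : 0 < (x - s) ^ 2 := sq_pos_of_ne_zero (sub_ne_zero.mpr hxs)
  have hsum : 0 < (x + s) ^ 2 + 2 * s ^ 2 := by
    by_contra! h
    have hs : s = 0 := by nlinarith [sq_nonneg (x + s), sq_nonneg s]
    have hx : x = 0 := by subst hs; nlinarith [sq_nonneg x]
    exact hxs (hx.trans hs.symm)
  nlinarith [mul_pos hsq hsum]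

lemma pow_four_sub_mul_pos {x k : ℝ} (hk : k ≤ 0) (hx : 0 < x) : 0 < x ^ 4 - 4 * k * x := by
  nlinarith [pow_pos hx 4, mul_nonneg (neg_nonneg.mpr hk) hx.le]

lemma pow_four_sub_mul_lt_of_ne_max_cbrt {k x : ℝ} (hx : 0 ≤ x) (hne : x ≠ max (cbrt k) 0) :
    max (cbrt k) 0 ^ 4 - 4 * k * max (cbrt k) 0 < x ^ 4 - 4 * k * x := by
  rcases lt_or_ge 0 k with hk | hk
  · have hs : 0 < cbrt k := by
      rwa [← Odd.pow_pos_iff (n := 3) (by decide), cbrt_pow_three]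
    rw [max_eq_left hs.le] at hne ⊢
    simpa only [cbrt_pow_three] using pow_four_sub_mul_lt_of_ne (s := cbrt k) hne
  · have hs : cbrt k ≤ 0 := by
      rwa [← Odd.pow_nonpos_iff (n := 3) (by decide), cbrt_pow_three]
    rw [max_eq_right hs] at hne ⊢
    simpa using pow_four_sub_mul_pos hk (lt_of_le_of_ne hx (Ne.symm hne))

lemma isMinOn_and_unique_of_forall_ne_lt {α β : Type*} [Preorder β] {f : α → β} {s : Set α}
    {m : α} (hm : m ∈ s) (hlt : ∀ x ∈ s, x ≠ m → f m < f x) :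
    (∀ x ∈ s, f m ≤ f x) ∧ ∀ z ∈ s, (∀ x ∈ s, f z ≤ f x) → z = m := by
  refine ⟨fun x hx => ?_, fun z hz hzmin => ?_⟩
  · by_cases hxm : x = m
    · rw [hxm]
    · exact (hlt x hx hxm).le
  · by_contra hzm
    exact (hlt z hz hzm).not_ge (hzmin m hm)

/-- if `c ≤ b²/(3a)`, the unique minimizer of `g̃` over `{x : x ≥ 0}` is
`x* = max(∛(b³/(27a³) − d/a) + x̃ − b/(3a), 0) = max(∛(x̃³ − d/4), 0)`. -/
theorem stmt_3 (xt c d : ℝ) (a b : ℝ) (ha : a = 4) (hb : b = 12 * xt)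
    (g : ℝ → ℝ)
    (hg : ∀ x, g x = (a / 4) * (x - xt) ^ 4 + (b / 3) * (x - xt) ^ 3
      + (c / 2) * (x - xt) ^ 2 + d * (x - xt))
    (ctil : ℝ) (hctil : ctil = max (b ^ 2 / (3 * a) - c) 0)
    (gtil : ℝ → ℝ) (hgtil : ∀ x, gtil x = g x + (ctil / 2) * (x - xt) ^ 2)
    (hc : c ≤ b ^ 2 / (3 * a))
    (xstar : ℝ)
    (hxstar : xstar = max (cbrt (b ^ 3 / (27 * a ^ 3) - d / a) + xt - b / (3 * a)) 0) :
    xstar = max (cbrt (xt ^ 3 - d / 4)) 0 ∧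
    0 ≤ xstar ∧ (∀ x : ℝ, 0 ≤ x → gtil xstar ≤ gtil x) ∧
    (∀ z : ℝ, 0 ≤ z → (∀ x : ℝ, 0 ≤ x → gtil z ≤ gtil x) → z = xstar) := by
  rw [max_eq_left (sub_nonneg.mpr hc)] at hctil
  subst ha hb
  set k := xt ^ 3 - d / 4
  have hxstar_eq : xstar = max (cbrt k) 0 := by
    rw [hxstar, show (12 * xt) ^ 3 / (27 * 4 ^ 3) - d / 4 = k by ring]
    congr 1
    ring
  have hgtil_eq : ∀ x, gtil x = (x ^ 4 - 4 * k * x) + (4 * k * xt - xt ^ 4) := fun x => by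
    rw [hgtil, hg, hctil]
    ring
  have hxstar_nonneg : 0 ≤ xstar := hxstar_eq ▸ le_max_right _ _
  obtain ⟨hmin, huniq⟩ := isMinOn_and_unique_of_forall_ne_lt (f := gtil) (s := Set.Ici 0)
    hxstar_nonneg fun x (hx : 0 ≤ x) hne => by
      simp only [hgtil_eq, hxstar_eq] at hne ⊢
      exact add_lt_add_left (pow_four_sub_mul_lt_of_ne_max_cbrt hx hne) _
  exact ⟨hxstar_eq, hxstar_nonneg, hmin, huniq⟩
end

section
/- Suppose c > b²/(3a) (equivalently, c > 12x̃²). Define p = (3ac − b²)/(3a²), q = (9abc − 27a²d − 2b³)/(27a³), and Δ = q²/4 + p³/27. Then Δ > 0, and the unique minimizer of g̃ over { x : x ≥ 0 } is x* = max(w, 0), where w = ∛(q/2 − √Δ) + ∛(q/2 + √Δ) and ∛ denotes the real cube root. -/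
lemma rpow_one_third_pow_three {x : ℝ} (hx : 0 ≤ x) : (x ^ ((1 : ℝ) / 3)) ^ 3 = x := by
  simpa using Real.rpow_inv_natCast_pow (n := 3) hx (by norm_num)

lemma cardano_root {p q : ℝ} (hΔ : 0 ≤ q ^ 2 / 4 + p ^ 3 / 27) :
    let w := cbrt (q / 2 - √(q ^ 2 / 4 + p ^ 3 / 27)) + cbrt (q / 2 + √(q ^ 2 / 4 + p ^ 3 / 27))
    w ^ 3 + p * w = q := by
  intro w
  set s := √(q ^ 2 / 4 + p ^ 3 / 27)
  set u := cbrt (q / 2 - s)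
  set v := cbrt (q / 2 + s)
  have hs : s ^ 2 = q ^ 2 / 4 + p ^ 3 / 27 := Real.sq_sqrt hΔ
  have hu : u ^ 3 = q / 2 - s := cbrt_pow_three _
  have hv : v ^ 3 = q / 2 + s := cbrt_pow_three _
  have huv : u * v = -p / 3 := by
    have h : (u * v) ^ 3 = (-p / 3) ^ 3 := by
      rw [mul_pow, hu, hv]
      linear_combination -hs
    exact (Odd.pow_inj (by decide)).mp h
  linear_combination hu + hv + 3 * (u + v) * huv

def depressedQuartic (p q x : ℝ) : ℝ := x ^ 4 + 2 * p * x ^ 2 - 4 * q * x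

lemma depressedQuartic_sub_of_root {p q w : ℝ} (hw : w ^ 3 + p * w = q) (x : ℝ) :
    depressedQuartic p q x - depressedQuartic p q w
      = (x - w) ^ 2 * ((x + w) ^ 2 + 2 * w ^ 2 + 2 * p) := by
  unfold depressedQuartic
  linear_combination (4 * (x - w)) * hw

lemma depressedQuartic_max_root_zero_lt {p q w : ℝ} (hp : 0 ≤ p) (hw : w ^ 3 + p * w = q)
    {x : ℝ} (hx : 0 ≤ x) (hne : x ≠ max w 0) :
    depressedQuartic p q (max w 0) < depressedQuartic p q x := by
  rcases le_or_gt 0 w with hw0 | hw0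
  · rw [max_eq_left hw0] at hne ⊢
    have hxw : 0 < (x - w) ^ 2 := by positivity [sub_ne_zero.mpr hne]
    have hfactor : 0 < (x + w) ^ 2 + 2 * w ^ 2 + 2 * p := by
      rcases hw0.eq_or_lt with rfl | hw0
      · have : x ≠ 0 := hne
        positivity
      · positivity
    linarith [depressedQuartic_sub_of_root hw x, mul_pos hxw hfactor]
  · rw [max_eq_right hw0.le] at hne ⊢
    have hx0 : 0 < x := lt_of_le_of_ne hx (Ne.symm hne)
    have hq : q < 0 := by
      rw [← hw]
      nlinarith [pow_pos (neg_pos.mpr hw0) 3]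
    unfold depressedQuartic
    nlinarith [pow_pos hx0 4, mul_nonneg hp (sq_nonneg x)]

/-- if `c > b²/(3a)` then `Δ > 0` and the unique minimizer of `g̃` over
`{x : x ≥ 0}` is `max(w, 0)` with `w = ∛(q/2 − √Δ) + ∛(q/2 + √Δ)`. -/
theorem stmt_4 (xt c d : ℝ) (a b : ℝ) (ha : a = 4) (hb : b = 12 * xt)
    (g : ℝ → ℝ)
    (hg : ∀ x, g x = (a / 4) * (x - xt) ^ 4 + (b / 3) * (x - xt) ^ 3
      + (c / 2) * (x - xt) ^ 2 + d * (x - xt))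
    (ctil : ℝ) (hctil : ctil = max (b ^ 2 / (3 * a) - c) 0)
    (gtil : ℝ → ℝ) (hgtil : ∀ x, gtil x = g x + (ctil / 2) * (x - xt) ^ 2)
    (hc : b ^ 2 / (3 * a) < c)
    (p q Δ : ℝ)
    (hp : p = (3 * a * c - b ^ 2) / (3 * a ^ 2))
    (hq : q = (9 * a * b * c - 27 * a ^ 2 * d - 2 * b ^ 3) / (27 * a ^ 3))
    (hΔ : Δ = q ^ 2 / 4 + p ^ 3 / 27)
    (w : ℝ) (hw : w = cbrt (q / 2 - Real.sqrt Δ) + cbrt (q / 2 + Real.sqrt Δ)) :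
    0 < Δ ∧
    0 ≤ max w 0 ∧ (∀ x : ℝ, 0 ≤ x → gtil (max w 0) ≤ gtil x) ∧
    (∀ z : ℝ, 0 ≤ z → (∀ x : ℝ, 0 ≤ x → gtil z ≤ gtil x) → z = max w 0) := by
  subst ha hb
  have hp0 : 0 < p := by
    rw [hp]
    rw [div_lt_iff₀ (by norm_num)] at hc
    apply div_pos <;> linarith
  have hΔ0 : 0 < Δ := by rw [hΔ]; positivity
  have hctil0 : ctil = 0 := by rw [hctil]; exact max_eq_right (by linarith)
  have hgtil_sub : ∀ x y, gtil x - gtil y = depressedQuartic p q x - depressedQuartic p q y := by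
    intro x y
    simp only [hgtil, hg, hctil0, hp, hq, depressedQuartic]
    ring
  have hw3 : w ^ 3 + p * w = q := by
    rw [hw, hΔ]
    exact cardano_root (hΔ ▸ hΔ0.le)
  have hstrict : ∀ x, 0 ≤ x → x ≠ max w 0 → gtil (max w 0) < gtil x := fun x hx hne => by
    linarith [hgtil_sub x (max w 0), depressedQuartic_max_root_zero_lt hp0.le hw3 hx hne]
  refine ⟨hΔ0, le_max_right _ _, fun x hx => ?_, fun z hz hmin => ?_⟩
  · rcases eq_or_ne x (max w 0) with rfl | hne
    · exact le_rfl
    · exact (hstrict x hx hne).le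
  · by_contra hne
    exact (hmin _ (le_max_right _ _)).not_gt (hstrict z hz hne)
end

section
/- Let M ∈ ℝ^{n×n} be symmetric, let X̃ ∈ ℝ^{n×r}, fix indices i ∈ {1,…,n} and j ∈ {1,…,r}, and let x ∈ ℝ. Let X = X̃ + (x − X̃_{ij}) E_{ij}, where E_{ij} ∈ ℝ^{n×r} has a 1 in entry (i,j) and 0 elsewhere. Then ‖M − XXᵀ‖² = ‖M − X̃X̃ᵀ‖² + (x − X̃_{ij})⁴ + 4 X̃_{ij} (x − X̃_{ij})³ + 2( (X̃X̃ᵀ)_{ii} − M_{ii} + (X̃ᵀX̃)_{jj} + X̃_{ij}² ) (x − X̃_{ij})² + 4 ( (X̃X̃ᵀ − M) X̃ )_{ij} (x − X̃_{ij}). -/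
/-!
Write `t = x - X̃ᵢⱼ`, `e = eᵢ` and `u = X̃eⱼ` for the `j`-th column of `X̃`. Then
`XXᵀ = X̃X̃ᵀ + Δ` with `Δ = t(euᵀ + ueᵀ) + t²eeᵀ`, so with `A = M - X̃X̃ᵀ` one has
`‖M - XXᵀ‖² = ‖A‖² - 2⟨A, Δ⟩ + ‖Δ‖²`. Since `A` is symmetric, `⟨A, Δ⟩ = 2t(Au)ᵢ + t²Aᵢᵢ`, and
`‖Δ‖² = t⁴ + 4t³uᵢ + 2t²(‖u‖² + uᵢ²)`; collecting powers of `t` gives the identity.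
-/

open Matrix Finset

attribute [local instance] Matrix.frobeniusNormedAddCommGroup Matrix.frobeniusNormedSpace

section Frobenius

variable {m n : Type*} [Fintype m] [Fintype n]

theorem frobenius_norm_sq_eq_sum (A : Matrix m n ℝ) : ‖A‖ ^ 2 = ∑ k, ∑ l, A k l ^ 2 := by
  rw [frobenius_norm_def, ← Real.rpow_natCast, ← Real.rpow_mul (by positivity)]
  norm_num

theorem frobenius_norm_sub_sq (A B : Matrix m n ℝ) :
    ‖A - B‖ ^ 2 = ‖A‖ ^ 2 - 2 * ∑ k, ∑ l, A k l * B k l + ‖B‖ ^ 2 := by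
  simp only [frobenius_norm_sq_eq_sum, Matrix.sub_apply, mul_sum, ← sum_sub_distrib,
    ← sum_add_distrib]
  congr! 2 with k _ l _
  ring

end Frobenius

section GramUpdate

variable {n : Type*} [DecidableEq n]

/-- The change of the Gram matrix `XXᵀ` when `t` is added to the entry `(i, j)` of a matrix `X`
whose `j`-th column is `u`. -/
def gramUpdate (u : n → ℝ) (i : n) (t : ℝ) : Matrix n n ℝ :=
  t • (vecMulVec (Pi.single i 1) u + vecMulVec u (Pi.single i 1))
    + t ^ 2 • vecMulVec (Pi.single i 1) (Pi.single i 1)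

theorem gramUpdate_apply (u : n → ℝ) (i : n) (t : ℝ) (k l : n) :
    gramUpdate u i t k l = t * ((if k = i then u l else 0) + (if l = i then u k else 0))
      + t ^ 2 * (if k = i ∧ l = i then 1 else 0) := by
  simp only [gramUpdate, Matrix.add_apply, Matrix.smul_apply, vecMulVec_apply, Pi.single_apply,
    smul_eq_mul, ite_and]
  split_ifs <;> ring

theorem add_smul_single_mul_transpose {m : Type*} [Fintype m] [DecidableEq m]
    (Y : Matrix n m ℝ) (i : n) (j : m) (t : ℝ) :
    (Y + t • single i j 1) * (Y + t • single i j 1)ᵀ = Y * Yᵀ + gramUpdate (Yᵀ j) i t := by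
  ext k l
  simp only [mul_apply, transpose_apply, Matrix.add_apply, Matrix.smul_apply, single_apply,
    add_mul, mul_add, sum_add_distrib, gramUpdate_apply]
  simp only [ite_and, smul_eq_mul, mul_ite, mul_one, mul_zero, ite_mul, zero_mul, sum_ite_irrel,
    sum_ite_eq, mem_univ, ↓reduceIte, sum_const_zero, eq_comm]
  split_ifs <;> ring

variable [Fintype n]

theorem sum_mul_gramUpdate {A : Matrix n n ℝ} (hA : A.IsSymm) (u : n → ℝ) (i : n) (t : ℝ) :
    ∑ k, ∑ l, A k l * gramUpdate u i t k l = 2 * t * (A *ᵥ u) i + t ^ 2 * A i i := by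
  simp only [gramUpdate_apply, mul_add, mul_ite, mul_zero, ite_and, mul_one, sum_add_distrib,
    sum_ite_irrel, sum_const_zero, sum_ite_eq', mem_univ, ↓reduceIte, mulVec, dotProduct]
  simp only [hA.apply i, mul_left_comm _ t, ← mul_sum]
  ring

theorem frobenius_norm_gramUpdate_sq (u : n → ℝ) (i : n) (t : ℝ) :
    ‖gramUpdate u i t‖ ^ 2 = t ^ 4 + 4 * t ^ 3 * u i + 2 * t ^ 2 * (u ⬝ᵥ u + u i ^ 2) := by
  rw [frobenius_norm_sq_eq_sum]
  simp only [gramUpdate_apply, mul_add, mul_ite, mul_zero, ite_and, mul_one, add_sq, ite_pow,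
    ne_eq, OfNat.ofNat_ne_zero, not_false_eq_true, zero_pow, ite_mul, zero_mul, sum_add_distrib,
    sum_ite_irrel, sum_const_zero, sum_ite_eq', mem_univ, ↓reduceIte, dotProduct]
  simp only [mul_pow, ← mul_sum, ← sq]
  ring

end GramUpdate

/-- single-entry update identity for the SNMF objective.  With
`X = X̃ + (x − X̃ᵢⱼ) Eᵢⱼ`,
`‖M − XXᵀ‖² = ‖M − X̃X̃ᵀ‖² + (x − X̃ᵢⱼ)⁴ + 4X̃ᵢⱼ(x − X̃ᵢⱼ)³
  + 2((X̃X̃ᵀ)ᵢᵢ − Mᵢᵢ + (X̃ᵀX̃)ⱼⱼ + X̃ᵢⱼ²)(x − X̃ᵢⱼ)² + 4((X̃X̃ᵀ − M)X̃)ᵢⱼ(x − X̃ᵢⱼ)`,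
where `‖·‖` is the Frobenius norm. -/
theorem stmt_6 {n r : ℕ} (M : Matrix (Fin n) (Fin n) ℝ) (hM : M.IsSymm)
    (Xt : Matrix (Fin n) (Fin r) ℝ) (i : Fin n) (j : Fin r) (x : ℝ)
    (X : Matrix (Fin n) (Fin r) ℝ)
    (hX : X = Xt + (x - Xt i j) • Matrix.single i j (1 : ℝ)) :
    ‖M - X * Xᵀ‖ ^ 2 =
      ‖M - Xt * Xtᵀ‖ ^ 2 + (x - Xt i j) ^ 4 + 4 * Xt i j * (x - Xt i j) ^ 3
        + 2 * ((Xt * Xtᵀ) i i - M i i + (Xtᵀ * Xt) j j + (Xt i j) ^ 2) * (x - Xt i j) ^ 2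
        + 4 * ((Xt * Xtᵀ - M) * Xt) i j * (x - Xt i j) := by
  have hA : (M - Xt * Xtᵀ).IsSymm := hM.sub (by rw [IsSymm, transpose_mul, transpose_transpose])
  have hAu : ((M - Xt * Xtᵀ) *ᵥ Xtᵀ j) i = -((Xt * Xtᵀ - M) * Xt) i j := by
    change ((M - Xt * Xtᵀ) * Xt) i j = _
    rw [← neg_sub, Matrix.neg_mul, neg_apply]
  have huu : Xtᵀ j ⬝ᵥ Xtᵀ j = (Xtᵀ * Xt) j j := rfl
  rw [hX, add_smul_single_mul_transpose, ← sub_sub, frobenius_norm_sub_sq, sum_mul_gramUpdate hA,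
    frobenius_norm_gramUpdate_sq, hAu, huu, transpose_apply, Matrix.sub_apply]
  ring
end

section
/- Let M ∈ ℝ^{n×n} be symmetric, let X̃ ∈ ℝ^{n×r}, and fix a row index i ∈ {1,…,n}. For x ∈ ℝʳ let X(x) denote the matrix X̃ with its i-th row replaced by xᵀ. Define P_i = Σ_{k ≠ i} X̃_{k:}ᵀ X̃_{k:} (where X̃_{k:} is the k-th row of X̃ viewed as a row vector), Q_i = P_i − M_{ii} I, and q_i = Σ_{k ≠ i} M_{ki} X̃_{k:}ᵀ. Then there exists a constant C, independent of x, such that for all x ∈ ℝʳ: ‖M − X(x)X(x)ᵀ‖² = ‖x‖⁴ + 2 xᵀ Q_i x − 4 q_iᵀ x + C. -/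
/-!
Only the entries of `M - X Xᵀ` in row and column `i` depend on `x`. By symmetry of `M` the
off-diagonal ones come in equal pairs `M k i - ⟨X̃ₖ, x⟩`, and the diagonal one is `M i i - ‖x‖²`.
Expanding their squares, `∑_{k ≠ i} ⟨X̃ₖ, x⟩² = xᵀ Pᵢ x` and `∑_{k ≠ i} M k i ⟨X̃ₖ, x⟩ = qᵢᵀ x`,
while the `-2 Mᵢᵢ ‖x‖²` from the diagonal entry is absorbed into `Qᵢ`.
-/

open Matrix

attribute [local instance] Matrix.frobeniusNormedAddCommGroup Matrix.frobeniusNormedSpace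

open Finset

theorem Matrix.frobenius_norm_sq_eq_sum_sq {m n : Type*} [Fintype m] [Fintype n]
    (A : Matrix m n ℝ) : ‖A‖ ^ 2 = ∑ k, ∑ l, A k l ^ 2 := by
  change ‖WithLp.toLp 2 fun k => WithLp.toLp 2 fun l => A k l‖ ^ 2 = _
  simp only [PiLp.norm_sq_eq_of_L2, Real.norm_eq_abs, sq_abs]

section SumSplit

variable {ι R : Type*} [Fintype ι] [DecidableEq ι] [AddCommMonoid R]

theorem Finset.sum_sum_eq_sum_erase_add (F : ι → ι → R) (i : ι) :
    ∑ k, ∑ l, F k l =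
      ∑ k ∈ univ.erase i, ∑ l ∈ univ.erase i, F k l +
        ∑ k ∈ univ.erase i, (F k i + F i k) + F i i := by
  simp only [← sum_erase_add univ _ (mem_univ i), sum_add_distrib]
  abel

end SumSplit

section GramForms

variable {m n R : Type*} [Fintype n] [CommSemiring R]

theorem dotProduct_mulVec_eq_sum_sq_mulVec (A : Matrix m n R) (S : Finset m)
    (P : Matrix n n R) (hP : ∀ a b, P a b = ∑ k ∈ S, A k a * A k b) (x : n → R) :
    x ⬝ᵥ P *ᵥ x = ∑ k ∈ S, (A *ᵥ x) k ^ 2 := by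
  simp only [dotProduct, mulVec, hP, sq, sum_mul, mul_sum]
  rw [sum_congr rfl fun a _ => sum_comm, sum_comm]
  refine sum_congr rfl fun k _ => ?_
  rw [sum_comm]
  exact sum_congr rfl fun a _ => sum_congr rfl fun b _ => by ring

theorem dotProduct_eq_sum_mul_mulVec (A : Matrix m n R) (S : Finset m) (w : m → R)
    (q : n → R) (hq : ∀ a, q a = ∑ k ∈ S, w k * A k a) (x : n → R) :
    q ⬝ᵥ x = ∑ k ∈ S, w k * (A *ᵥ x) k := by
  simp only [dotProduct, mulVec, hq, sum_mul, mul_sum]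
  rw [sum_comm]
  exact sum_congr rfl fun k _ => sum_congr rfl fun a _ => by ring

end GramForms

theorem frobenius_norm_sq_sub_updateRow_mul_transpose {m n : Type*} [Fintype m]
    [DecidableEq m] [Fintype n] {M : Matrix m m ℝ} (hM : M.IsSymm) (X : Matrix m n ℝ)
    (i : m) (x : n → ℝ) :
    ‖M - X.updateRow i x * (X.updateRow i x)ᵀ‖ ^ 2 =
      ∑ k ∈ univ.erase i, ∑ l ∈ univ.erase i, (M k l - X k ⬝ᵥ X l) ^ 2 +
        2 * ∑ k ∈ univ.erase i, (M k i - (X *ᵥ x) k) ^ 2 + (M i i - x ⬝ᵥ x) ^ 2 := by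
  have hentry : ∀ k l, (M - X.updateRow i x * (X.updateRow i x)ᵀ) k l =
      M k l - X.updateRow i x k ⬝ᵥ X.updateRow i x l := fun _ _ => rfl
  have hcross : ∀ k, M k i - X k ⬝ᵥ x = M i k - x ⬝ᵥ X k := fun k => by
    rw [hM.apply, dotProduct_comm]
  rw [frobenius_norm_sq_eq_sum_sq, sum_sum_eq_sum_erase_add _ i, mul_sum]
  simp only [hentry, updateRow_self]
  congr 2
  · refine sum_congr rfl fun k hk => sum_congr rfl fun l hl => ?_
    rw [updateRow_ne (ne_of_mem_erase hk), updateRow_ne (ne_of_mem_erase hl)]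
  · refine sum_congr rfl fun k hk => ?_
    rw [updateRow_ne (ne_of_mem_erase hk), ← hcross k, two_mul]
    rfl

/-- row update identity for the SNMF objective.  With `X(x)` equal to `X̃`
with its `i`-th row replaced by `xᵀ`, `Pᵢ = Σ_{k ≠ i} X̃ₖ₍ᵀX̃ₖ₎`, `Qᵢ = Pᵢ − Mᵢᵢ I`,
`qᵢ = Σ_{k ≠ i} Mₖᵢ X̃ₖᵀ`, there exists a constant `C` (independent of `x`) with
`‖M − X(x)X(x)ᵀ‖² = ‖x‖⁴ + 2xᵀQᵢx − 4qᵢᵀx + C` for all `x ∈ ℝʳ`.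
Here `‖M − ⋯‖` is the Frobenius norm and `(Σₐ xₐ²)` is the squared Euclidean norm of `x`. -/
theorem stmt_7 {n r : ℕ} (M : Matrix (Fin n) (Fin n) ℝ) (hM : M.IsSymm)
    (Xt : Matrix (Fin n) (Fin r) ℝ) (i : Fin n)
    (P Q : Matrix (Fin r) (Fin r) ℝ) (q : Fin r → ℝ)
    (hP : ∀ a b, P a b = ∑ k ∈ Finset.univ.erase i, Xt k a * Xt k b)
    (hQ : Q = P - M i i • (1 : Matrix (Fin r) (Fin r) ℝ))
    (hq : ∀ a, q a = ∑ k ∈ Finset.univ.erase i, M k i * Xt k a) :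
    ∃ C : ℝ, ∀ x : Fin r → ℝ,
      ‖M - (Xt.updateRow i x) * (Xt.updateRow i x)ᵀ‖ ^ 2 =
        (∑ a, (x a) ^ 2) ^ 2 + 2 * (x ⬝ᵥ Q.mulVec x) - 4 * (q ⬝ᵥ x) + C := by
  refine ⟨∑ k ∈ univ.erase i, ∑ l ∈ univ.erase i, (M k l - Xt k ⬝ᵥ Xt l) ^ 2 +
    2 * ∑ k ∈ univ.erase i, M k i ^ 2 + M i i ^ 2, fun x => ?_⟩
  have hQx : x ⬝ᵥ Q *ᵥ x = x ⬝ᵥ P *ᵥ x - M i i * (x ⬝ᵥ x) := by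
    rw [hQ, sub_mulVec, dotProduct_sub, smul_mulVec, one_mulVec, dotProduct_smul, smul_eq_mul]
  have hxx : ∑ a, x a ^ 2 = x ⬝ᵥ x := by simp only [dotProduct, sq]
  rw [frobenius_norm_sq_sub_updateRow_mul_transpose hM, hQx, hxx,
    dotProduct_mulVec_eq_sum_sq_mulVec Xt _ P hP, dotProduct_eq_sum_mul_mulVec Xt _ _ q hq]
  have hexpand : ∑ k ∈ univ.erase i, (M k i - (Xt *ᵥ x) k) ^ 2 =
      ∑ k ∈ univ.erase i, M k i ^ 2 - 2 * ∑ k ∈ univ.erase i, M k i * (Xt *ᵥ x) k +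
        ∑ k ∈ univ.erase i, (Xt *ᵥ x) k ^ 2 := by
    simp only [sub_sq, sum_add_distrib, sum_sub_distrib, mul_sum, mul_assoc]
  rw [hexpand]
  ring
end

section
/- Let S ≥ 0 be a real number and let b ∈ ℝʳ have at least one strictly positive entry. Set β = ‖[b]₊‖ > 0, Δ = β²/4 + S³/27, and t = ∛(β/2 − √Δ) + ∛(β/2 + √Δ), where ∛ denotes the real cube root. Then x* = t · [b]₊ / ‖[b]₊‖ is the unique minimizer of h(x) = ‖x‖⁴ + 2S‖x‖² − 4bᵀx over the nonnegative orthant {x ∈ ℝʳ : x ≥ 0}. -/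
theorem cardano_pow_three_add_mul {p q Δ : ℝ} (hΔ : Δ = q ^ 2 / 4 + p ^ 3 / 27) (hΔ0 : 0 ≤ Δ) :
    (cbrt (q / 2 - √Δ) + cbrt (q / 2 + √Δ)) ^ 3 + p * (cbrt (q / 2 - √Δ) + cbrt (q / 2 + √Δ))
      = q := by
  set u := cbrt (q / 2 - √Δ)
  set v := cbrt (q / 2 + √Δ)
  have hu : u ^ 3 = q / 2 - √Δ := cbrt_pow_three _
  have hv : v ^ 3 = q / 2 + √Δ := cbrt_pow_three _
  have huv : u * v = -p / 3 := by
    rw [← (Odd.pow_inj (n := 3) ⟨1, rfl⟩), mul_pow, hu, hv]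
    linear_combination (-1) * Real.sq_sqrt hΔ0 - hΔ
  linear_combination hu + hv + 3 * (u + v) * huv

lemma pos_of_pow_three_add_mul_eq {p q t : ℝ} (hp : 0 ≤ p) (hq : 0 < q)
    (ht : t ^ 3 + p * t = q) : 0 < t := by
  by_contra! h
  nlinarith [Odd.pow_nonpos (n := 3) ⟨1, rfl⟩ h, mul_nonpos_of_nonneg_of_nonpos hp h]

section Profile

/-- The objective `h` restricted to the ray through `[b]₊`, as a function of the radius `s`. -/
def quarticProfile (S β s : ℝ) : ℝ := s ^ 4 + 2 * S * s ^ 2 - 4 * β * s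

variable {S β t : ℝ}

lemma quarticProfile_sub_quarticProfile (ht : t ^ 3 + S * t = β) (s : ℝ) :
    quarticProfile S β s - quarticProfile S β t = (s - t) ^ 2 * ((s + t) ^ 2 + 2 * t ^ 2 + 2 * S) := by
  subst ht
  unfold quarticProfile
  ring

lemma quarticProfile_le (hS : 0 ≤ S) (ht : t ^ 3 + S * t = β) (s : ℝ) :
    quarticProfile S β t ≤ quarticProfile S β s := by
  have := quarticProfile_sub_quarticProfile ht s
  nlinarith [mul_nonneg (sq_nonneg (s - t)) (by positivity : 0 ≤ (s + t) ^ 2 + 2 * t ^ 2 + 2 * S)]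

lemma eq_of_quarticProfile_le (hS : 0 ≤ S) (htpos : 0 < t) (ht : t ^ 3 + S * t = β) {s : ℝ}
    (hs : quarticProfile S β s ≤ quarticProfile S β t) : s = t := by
  have hfac : 0 < (s + t) ^ 2 + 2 * t ^ 2 + 2 * S := by positivity
  have := quarticProfile_sub_quarticProfile ht s
  have hsq : (s - t) ^ 2 = 0 := by
    nlinarith [mul_nonneg (sq_nonneg (s - t)) hfac.le, sq_nonneg (s - t)]
  exact sub_eq_zero.mp (pow_eq_zero_iff two_ne_zero |>.mp hsq)

end Profile

section PosPart

variable {ι : Type*} {b bp x : EuclideanSpace ℝ ι}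

lemma posPart_ne_zero (hbp : ∀ i, bp i = max (b i) 0) (hb : ∃ i, 0 < b i) : bp ≠ 0 := by
  obtain ⟨i, hi⟩ := hb
  intro h0
  have : bp i = 0 := by simp [h0]
  rw [hbp i] at this
  exact (lt_max_of_lt_left hi).ne' this

lemma posPart_apply_nonneg (hbp : ∀ i, bp i = max (b i) 0) (i : ι) : 0 ≤ bp i :=
  (hbp i).symm ▸ le_max_right _ _

variable [Fintype ι]

lemma sum_mul_eq_inner (a y : EuclideanSpace ℝ ι) : ∑ i, a i * y i = inner ℝ a y := by
  simp [PiLp.inner_apply, mul_comm]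

lemma sum_mul_posPart (hbp : ∀ i, bp i = max (b i) 0) : ∑ i, b i * bp i = ‖bp‖ ^ 2 := by
  rw [← real_inner_self_eq_norm_sq, ← sum_mul_eq_inner]
  refine Finset.sum_congr rfl fun i _ => ?_
  rw [hbp i]
  rcases le_total 0 (b i) with hbi | hbi
  · rw [max_eq_left hbi]
  · rw [max_eq_right hbi]; ring

lemma sum_mul_smul_posPart (hbp : ∀ i, bp i = max (b i) 0) (c : ℝ) :
    ∑ i, b i * (c • bp) i = c * ‖bp‖ ^ 2 := by
  simp_rw [PiLp.smul_apply, smul_eq_mul, mul_left_comm _ c, ← Finset.mul_sum, sum_mul_posPart hbp]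

lemma sum_mul_le_sum_posPart_mul (hbp : ∀ i, bp i = max (b i) 0) (hx : ∀ i, 0 ≤ x i) :
    ∑ i, b i * x i ≤ ∑ i, bp i * x i :=
  Finset.sum_le_sum fun i _ => mul_le_mul_of_nonneg_right ((hbp i).symm ▸ le_max_left _ _) (hx i)

lemma sum_mul_le_norm_posPart_mul_norm (hbp : ∀ i, bp i = max (b i) 0) (hx : ∀ i, 0 ≤ x i) :
    ∑ i, b i * x i ≤ ‖bp‖ * ‖x‖ :=
  (sum_mul_le_sum_posPart_mul hbp hx).trans <|
    (sum_mul_eq_inner bp x).trans_le (real_inner_le_norm bp x)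

lemma eq_smul_posPart_of_norm_mul_le_sum_mul (hbp : ∀ i, bp i = max (b i) 0) (hbp0 : bp ≠ 0)
    (hx : ∀ i, 0 ≤ x i) (heq : ‖bp‖ * ‖x‖ ≤ ∑ i, b i * x i) : x = (‖x‖ / ‖bp‖) • bp := by
  have hinner : inner ℝ bp x = ‖bp‖ * ‖x‖ := by
    refine le_antisymm (real_inner_le_norm bp x) ?_
    rw [← sum_mul_eq_inner]
    exact heq.trans (sum_mul_le_sum_posPart_mul hbp hx)
  have hsmul : ‖x‖ • bp = ‖bp‖ • x := inner_eq_norm_mul_iff_real.mp hinner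
  rw [div_eq_inv_mul, mul_smul, hsmul, inv_smul_smul₀ (norm_ne_zero_iff.mpr hbp0)]

end PosPart

/-- if `S ≥ 0` and `b` has at least one strictly positive entry, then with
`β = ‖[b]₊‖`, `Δ = β²/4 + S³/27`, `t = ∛(β/2 − √Δ) + ∛(β/2 + √Δ)`, the point
`x* = t·[b]₊/‖[b]₊‖` is the unique minimizer of `h(x) = ‖x‖⁴ + 2S‖x‖² − 4bᵀx`
over the nonnegative orthant (and `β > 0`). -/
theorem stmt_9 {r : ℕ} (S : ℝ) (hS : 0 ≤ S)
    (b : EuclideanSpace ℝ (Fin r)) (hbpos : ∃ i, 0 < b i)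
    (bp : EuclideanSpace ℝ (Fin r)) (hbp : ∀ i, bp i = max (b i) 0)
    (β : ℝ) (hβ : β = ‖bp‖)
    (Δ : ℝ) (hΔ : Δ = β ^ 2 / 4 + S ^ 3 / 27)
    (t : ℝ) (ht : t = cbrt (β / 2 - Real.sqrt Δ) + cbrt (β / 2 + Real.sqrt Δ))
    (h : EuclideanSpace ℝ (Fin r) → ℝ)
    (hh : ∀ x, h x = ‖x‖ ^ 4 + 2 * S * ‖x‖ ^ 2 - 4 * ∑ i, b i * x i)
    (xstar : EuclideanSpace ℝ (Fin r)) (hxstar : xstar = (t / ‖bp‖) • bp) :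
    0 < β ∧
    (∀ i, 0 ≤ xstar i) ∧
    (∀ x : EuclideanSpace ℝ (Fin r), (∀ i, 0 ≤ x i) → h xstar ≤ h x) ∧
    (∀ x : EuclideanSpace ℝ (Fin r), (∀ i, 0 ≤ x i) →
      (∀ y : EuclideanSpace ℝ (Fin r), (∀ i, 0 ≤ y i) → h x ≤ h y) → x = xstar) := by
  have hbp0 := posPart_ne_zero hbp hbpos
  have hβpos : 0 < β := hβ ▸ norm_pos_iff.mpr hbp0
  have hcubic : t ^ 3 + S * t = β := ht ▸ cardano_pow_three_add_mul hΔ (by rw [hΔ]; positivity)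
  have htpos := pos_of_pow_three_add_mul_eq hS hβpos hcubic
  have hxstar_nonneg : ∀ i, 0 ≤ xstar i := fun i => by
    simpa [hxstar] using mul_nonneg (div_pos htpos (hβ ▸ hβpos)).le (posPart_apply_nonneg hbp i)
  have hxstar_norm : ‖xstar‖ = t := by
    rw [hxstar, norm_smul, Real.norm_of_nonneg (div_pos htpos (hβ ▸ hβpos)).le,
      div_mul_cancel₀ _ (norm_ne_zero_iff.mpr hbp0)]
  have hxstar_sum : ∑ i, b i * xstar i = β * t := by
    rw [hxstar, sum_mul_smul_posPart hbp, hβ]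
    field_simp
  have hhxstar : h xstar = quarticProfile S β t := by
    rw [hh, hxstar_norm, hxstar_sum, quarticProfile]; ring
  have hprofile_le : ∀ x : EuclideanSpace ℝ (Fin r), (∀ i, 0 ≤ x i) →
      quarticProfile S β ‖x‖ ≤ h x := fun x hx => by
    rw [hh, quarticProfile, hβ]
    linarith [sum_mul_le_norm_posPart_mul_norm hbp hx]
  have hmin : ∀ x : EuclideanSpace ℝ (Fin r), (∀ i, 0 ≤ x i) → h xstar ≤ h x := fun x hx =>
    hhxstar ▸ (quarticProfile_le hS hcubic _).trans (hprofile_le x hx)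
  refine ⟨hβpos, hxstar_nonneg, hmin, fun x hx hxmin => ?_⟩
  have hle : h x ≤ quarticProfile S β t := hhxstar ▸ hxmin xstar hxstar_nonneg
  have hnorm : ‖x‖ = t := eq_of_quarticProfile_le hS htpos hcubic ((hprofile_le x hx).trans hle)
  rw [hxstar, ← hnorm]
  refine eq_smul_posPart_of_norm_mul_le_sum_mul hbp hbp0 hx ?_
  rw [hh, hnorm, quarticProfile] at hle
  rw [← hβ, hnorm]
  linarith
end

section
/- Let S ≥ 0 be a real number and b ∈ ℝʳ. A point x ≥ 0 minimizes h_b(x) = ‖x‖⁴ + 2S‖x‖² − 4bᵀx over the nonnegative orthant {x ∈ ℝʳ : x ≥ 0} if and only if it minimizes h_{[b]₊}(x) = ‖x‖⁴ + 2S‖x‖² − 4[b]₊ᵀx over the nonnegative orthant; in particular both problems have the same optimal value, and every common minimizer x satisfies x_i = 0 for every index i with b_i < 0. -/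
/-!
Zeroing the coordinates of `x` where `b` is negative leaves `⟨[b]₊, x⟩` unchanged, does not
increase `‖x‖`, and yields a point where `h_b = h_{[b]₊}`. As `t ↦ t⁴ + 2St²` is increasing on
`t ≥ 0` when `S ≥ 0`, the truncation does not increase `h_{[b]₊}`, and strictly decreases it at
any point with such a nonzero coordinate. With `h_{[b]₊} ≤ h_b` on the orthant, each objective is
thus dominated on the orthant by the other, which forces equal infima and lets minimizers pass
between the two problems.
-/

open Finset

section Sandwich

variable {α β : Type*} {f g : α → β} {s : Set α}

theorem IsMinOn.of_le_of_exists_le [Preorder β] {a : α} (hgf : ∀ x ∈ s, g x ≤ f x)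
    (hfg : ∀ y ∈ s, ∃ z ∈ s, f z ≤ g y) (ha : a ∈ s) (h : IsMinOn f s a) : IsMinOn g s a :=
  isMinOn_iff.2 fun y hy =>
    let ⟨_, hz, hzy⟩ := hfg y hy
    (hgf a ha).trans ((isMinOn_iff.1 h _ hz).trans hzy)

theorem csInf_image_eq_of_le_of_exists_le [ConditionallyCompleteLinearOrder β]
    (hgf : ∀ x ∈ s, g x ≤ f x) (hfg : ∀ y ∈ s, ∃ z ∈ s, f z ≤ g y) :
    sInf (f '' s) = sInf (g '' s) := by
  refine csInf_eq_csInf_of_forall_exists_le ?_ ?_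
  · rintro _ ⟨x, hx, rfl⟩
    exact ⟨g x, Set.mem_image_of_mem g hx, hgf x hx⟩
  · rintro _ ⟨y, hy, rfl⟩
    obtain ⟨z, hz, hzy⟩ := hfg y hy
    exact ⟨f z, Set.mem_image_of_mem f hz, hzy⟩

end Sandwich

namespace OrthantQuartic

variable {ι : Type*}

noncomputable def objective [Fintype ι] (S : ℝ) (c x : EuclideanSpace ℝ ι) : ℝ :=
  ‖x‖ ^ 4 + 2 * S * ‖x‖ ^ 2 - 4 * ∑ i, c i * x i

def orthant : Set (EuclideanSpace ℝ ι) := {x | ∀ i, 0 ≤ x i}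

noncomputable def truncate (b x : EuclideanSpace ℝ ι) : EuclideanSpace ℝ ι :=
  WithLp.toLp 2 fun i => if 0 ≤ b i then x i else 0

variable {S : ℝ} {b bp c x y : EuclideanSpace ℝ ι}

theorem truncate_apply (i : ι) : truncate b x i = if 0 ≤ b i then x i else 0 := rfl

theorem truncate_apply_eq_zero {i : ι} (hi : b i < 0) : truncate b x i = 0 :=
  if_neg hi.not_ge

theorem truncate_mem_orthant (hx : x ∈ orthant) : truncate b x ∈ orthant := fun i => by
  rw [truncate_apply]
  split_ifs
  exacts [hx i, le_rfl]

theorem truncate_apply_sq_le (i : ι) : truncate b x i ^ 2 ≤ x i ^ 2 := by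
  rw [truncate_apply]
  split_ifs
  exacts [le_rfl, by rw [zero_pow two_ne_zero]; positivity]

variable [Fintype ι]

theorem norm_truncate_le : ‖truncate b x‖ ≤ ‖x‖ := by
  refine le_of_pow_le_pow_left₀ two_ne_zero (norm_nonneg _) ?_
  rw [EuclideanSpace.real_norm_sq_eq, EuclideanSpace.real_norm_sq_eq]
  exact sum_le_sum fun i _ => truncate_apply_sq_le i

theorem norm_truncate_lt {j : ι} (hj : b j < 0) (hxj : x j ≠ 0) : ‖truncate b x‖ < ‖x‖ := by
  refine lt_of_pow_lt_pow_left₀ 2 (norm_nonneg _) ?_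
  rw [EuclideanSpace.real_norm_sq_eq, EuclideanSpace.real_norm_sq_eq]
  refine sum_lt_sum (fun i _ => truncate_apply_sq_le i) ⟨j, mem_univ j, ?_⟩
  rw [truncate_apply_eq_zero hj, zero_pow two_ne_zero]
  positivity

theorem sum_mul_le_sum_posPart_mul (hbp : ∀ i, bp i = max (b i) 0) (hx : x ∈ orthant) :
    ∑ i, b i * x i ≤ ∑ i, bp i * x i :=
  sum_le_sum fun i _ => by
    rw [hbp i]
    exact mul_le_mul_of_nonneg_right (le_max_left _ _) (hx i)

theorem sum_mul_eq_sum_posPart_mul (hbp : ∀ i, bp i = max (b i) 0)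
    (hx : ∀ i, b i < 0 → x i = 0) :
    ∑ i, b i * x i = ∑ i, bp i * x i :=
  sum_congr rfl fun i _ => by
    rcases le_or_gt 0 (b i) with hi | hi
    · rw [hbp i, max_eq_left hi]
    · rw [hx i hi, mul_zero, mul_zero]

theorem sum_posPart_mul_truncate (hbp : ∀ i, bp i = max (b i) 0) :
    ∑ i, bp i * truncate b x i = ∑ i, bp i * x i :=
  sum_congr rfl fun i _ => by
    rcases le_or_gt 0 (b i) with hi | hi
    · rw [truncate_apply, if_pos hi]
    · rw [hbp i, max_eq_right hi.le, zero_mul, zero_mul]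

theorem objective_le_of_norm_le (hS : 0 ≤ S) (hxy : ‖x‖ ≤ ‖y‖)
    (hc : ∑ i, c i * x i = ∑ i, c i * y i) : objective S c x ≤ objective S c y := by
  have h2 : ‖x‖ ^ 2 ≤ ‖y‖ ^ 2 := pow_le_pow_left₀ (norm_nonneg x) hxy 2
  have h4 : ‖x‖ ^ 4 ≤ ‖y‖ ^ 4 := pow_le_pow_left₀ (norm_nonneg x) hxy 4
  unfold objective
  rw [hc]
  nlinarith

theorem objective_lt_of_norm_lt (hS : 0 ≤ S) (hxy : ‖x‖ < ‖y‖)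
    (hc : ∑ i, c i * x i = ∑ i, c i * y i) : objective S c x < objective S c y := by
  have h2 : ‖x‖ ^ 2 ≤ ‖y‖ ^ 2 := pow_le_pow_left₀ (norm_nonneg x) hxy.le 2
  have h4 : ‖x‖ ^ 4 < ‖y‖ ^ 4 := pow_lt_pow_left₀ hxy (norm_nonneg x) four_ne_zero
  unfold objective
  rw [hc]
  nlinarith

theorem objective_posPart_le (hbp : ∀ i, bp i = max (b i) 0) (hx : x ∈ orthant) :
    objective S bp x ≤ objective S b x := by
  have := sum_mul_le_sum_posPart_mul hbp hx
  unfold objective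
  linarith

theorem objective_eq_objective_posPart (hbp : ∀ i, bp i = max (b i) 0)
    (hx : ∀ i, b i < 0 → x i = 0) : objective S b x = objective S bp x := by
  rw [objective, objective, sum_mul_eq_sum_posPart_mul hbp hx]

theorem objective_truncate_le (hbp : ∀ i, bp i = max (b i) 0) (hS : 0 ≤ S) :
    objective S b (truncate b x) ≤ objective S bp x :=
  (objective_eq_objective_posPart hbp fun _ => truncate_apply_eq_zero).trans_le
    (objective_le_of_norm_le hS norm_truncate_le (sum_posPart_mul_truncate hbp))

theorem eq_zero_of_isMinOn_objective_posPart (hbp : ∀ i, bp i = max (b i) 0) (hS : 0 ≤ S)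
    (hmin : IsMinOn (objective S bp) orthant x) (hx : x ∈ orthant) {i : ι} (hi : b i < 0) :
    x i = 0 := by
  by_contra hxi
  exact (objective_lt_of_norm_lt hS (norm_truncate_lt hi hxi)
    (sum_posPart_mul_truncate hbp)).not_ge (isMinOn_iff.1 hmin _ (truncate_mem_orthant hx))

end OrthantQuartic

open OrthantQuartic

/-- for `S ≥ 0` and `b ∈ ℝʳ`, a point `x ≥ 0` minimizes
`h_b(x) = ‖x‖⁴ + 2S‖x‖² − 4bᵀx` over the nonnegative orthant iff it minimizes
`h_{[b]₊}(x) = ‖x‖⁴ + 2S‖x‖² − 4[b]₊ᵀx` over the nonnegative orthant; both problems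
have the same optimal value, and every common minimizer `x` satisfies `xᵢ = 0`
whenever `bᵢ < 0`. -/
theorem stmt_10 {r : ℕ} (S : ℝ) (hS : 0 ≤ S)
    (b : EuclideanSpace ℝ (Fin r))
    (bp : EuclideanSpace ℝ (Fin r)) (hbp : ∀ i, bp i = max (b i) 0)
    (hb hp : EuclideanSpace ℝ (Fin r) → ℝ)
    (hhb : ∀ x, hb x = ‖x‖ ^ 4 + 2 * S * ‖x‖ ^ 2 - 4 * ∑ i, b i * x i)
    (hhp : ∀ x, hp x = ‖x‖ ^ 4 + 2 * S * ‖x‖ ^ 2 - 4 * ∑ i, bp i * x i) :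
    (∀ x : EuclideanSpace ℝ (Fin r), (∀ i, 0 ≤ x i) →
      ((∀ y : EuclideanSpace ℝ (Fin r), (∀ i, 0 ≤ y i) → hb x ≤ hb y) ↔
        (∀ y : EuclideanSpace ℝ (Fin r), (∀ i, 0 ≤ y i) → hp x ≤ hp y))) ∧
    sInf (hb '' {x : EuclideanSpace ℝ (Fin r) | ∀ i, 0 ≤ x i}) =
      sInf (hp '' {x : EuclideanSpace ℝ (Fin r) | ∀ i, 0 ≤ x i}) ∧
    (∀ x : EuclideanSpace ℝ (Fin r), (∀ i, 0 ≤ x i) →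
      (∀ y : EuclideanSpace ℝ (Fin r), (∀ i, 0 ≤ y i) → hb x ≤ hb y) →
      (∀ y : EuclideanSpace ℝ (Fin r), (∀ i, 0 ≤ y i) → hp x ≤ hp y) →
      ∀ i, b i < 0 → x i = 0) := by
  obtain rfl : hb = objective S b := funext hhb
  obtain rfl : hp = objective S bp := funext hhp
  have hle : ∀ x ∈ orthant, objective S bp x ≤ objective S b x := fun _ => objective_posPart_le hbp
  have hdom : ∀ y ∈ orthant, ∃ z ∈ orthant, objective S b z ≤ objective S bp y :=
    fun y hy => ⟨truncate b y, truncate_mem_orthant hy, objective_truncate_le hbp hS⟩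
  have hzero : ∀ x ∈ orthant, IsMinOn (objective S bp) orthant x → ∀ i, b i < 0 → x i = 0 :=
    fun x hx hmin i hi => eq_zero_of_isMinOn_objective_posPart hbp hS hmin hx hi
  refine ⟨fun x hx => ⟨IsMinOn.of_le_of_exists_le hle hdom hx, fun hmin y hy => ?_⟩,
    csInf_image_eq_of_le_of_exists_le hle hdom, fun x hx _ hmin => hzero x hx hmin⟩
  calc objective S b x = objective S bp x := objective_eq_objective_posPart hbp (hzero x hx hmin)
    _ ≤ objective S bp y := hmin y hy
    _ ≤ objective S b y := hle y hy
end

section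
/- Let X = X₁ × ⋯ × X_m where each X_i ⊆ ℝ^{n_i} is closed and convex, and let f : X → ℝ be continuous. For each i let u_i : X_i × X → ℝ be continuous and satisfy (i) u_i(x_i; x) = f(x) for all x ∈ X, and (ii) u_i(y_i; x) ≥ f(x_{<i}, y_i, x_{>i}) for all y_i ∈ X_i and x ∈ X, where (x_{<i}, y_i, x_{>i}) denotes x with its i-th block component replaced by y_i. Suppose x^{k_j} ∈ X is a sequence converging to x^∞ ∈ X such that, for each i, f(x^{k_j}) − inf_{y_i ∈ X_i} u_i(y_i; x^{k_j}) → 0 as j → ∞. Then for every i, u_i(x_i^∞; x^∞) ≤ u_i(y_i; x^∞) for all y_i ∈ X_i; i.e., x_i^∞ is a global minimizer of u_i(·; x^∞) over X_i. -/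
open Filter Topology

theorem le_of_tendsto_of_forall_eventually_le_add {ι : Type*} {l : Filter ι} [l.NeBot]
    {a b : ι → ℝ} {A B : ℝ} (ha : Tendsto a l (𝓝 A)) (hb : Tendsto b l (𝓝 B))
    (h : ∀ ε > 0, ∀ᶠ k in l, a k ≤ b k + ε) : A ≤ B :=
  le_of_forall_pos_le_add fun ε hε =>
    le_of_tendsto_of_tendsto ha (hb.add_const ε) (h ε hε)

theorem ContinuousOn.tendsto_comp_of_eventually_mem {α β ι : Type*} [TopologicalSpace α]
    [TopologicalSpace β] {f : α → β} {s : Set α} {x : α} {l : Filter ι} {xs : ι → α}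
    (hf : ContinuousOn f s) (hx : x ∈ s) (hxs : ∀ᶠ k in l, xs k ∈ s)
    (hlim : Tendsto xs l (𝓝 x)) : Tendsto (fun k => f (xs k)) l (𝓝 (f x)) :=
  (hf x hx).tendsto.comp (tendsto_nhdsWithin_iff.2 ⟨hlim, hxs⟩)

theorem stmt_13_general (m : ℕ) (n : Fin m → ℕ)
    (Xi : ∀ i : Fin m, Set (EuclideanSpace ℝ (Fin (n i))))
    (f : (∀ i : Fin m, EuclideanSpace ℝ (Fin (n i))) → ℝ)
    (hf : ContinuousOn f (Set.pi Set.univ Xi))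
    (u : ∀ i : Fin m,
      EuclideanSpace ℝ (Fin (n i)) → (∀ j : Fin m, EuclideanSpace ℝ (Fin (n j))) → ℝ)
    (hu_cont : ∀ i, ContinuousOn
      (fun p : EuclideanSpace ℝ (Fin (n i)) × (∀ j : Fin m, EuclideanSpace ℝ (Fin (n j))) =>
        u i p.1 p.2) ((Xi i) ×ˢ (Set.pi Set.univ Xi)))
    (hu_eq : ∀ i, ∀ x ∈ Set.pi Set.univ Xi, u i (x i) x = f x)
    (xs : ℕ → ∀ i : Fin m, EuclideanSpace ℝ (Fin (n i)))
    (hxs : ∀ k, xs k ∈ Set.pi Set.univ Xi)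
    (xinf : ∀ i : Fin m, EuclideanSpace ℝ (Fin (n i)))
    (hxinf : xinf ∈ Set.pi Set.univ Xi)
    (hlim : Tendsto xs atTop (nhds xinf))
    (hgap : ∀ i, ∀ ε : ℝ, 0 < ε →
      ∀ᶠ k in atTop, ∀ y ∈ Xi i, f (xs k) ≤ u i y (xs k) + ε) :
    ∀ i, ∀ y ∈ Xi i, u i (xinf i) xinf ≤ u i y xinf := by
  intro i y hy
  have hf_lim : Tendsto (fun k => f (xs k)) atTop (𝓝 (f xinf)) :=
    hf.tendsto_comp_of_eventually_mem hxinf (.of_forall hxs) hlim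
  have hu_lim : Tendsto (fun k => u i y (xs k)) atTop (𝓝 (u i y xinf)) :=
    (hu_cont i).tendsto_comp_of_eventually_mem (xs := fun k => (y, xs k)) ⟨hy, hxinf⟩
      (.of_forall fun k => ⟨hy, hxs k⟩) (tendsto_const_nhds.prodMk_nhds hlim)
  rw [hu_eq i xinf hxinf]
  exact le_of_tendsto_of_forall_eventually_le_add hf_lim hu_lim fun ε hε =>
    (hgap i ε hε).mono fun k hk => hk y hy

/-- limit points of sequences along which the block upper-bound gaps
vanish are blockwise minimizers of the upper bounds.  The hypothesis
`f(x^{k_j}) − inf_{y ∈ Xᵢ} uᵢ(y; x^{k_j}) → 0` is expressed in ε-form: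
for every `ε > 0`, eventually `f(x^{k_j}) ≤ uᵢ(y; x^{k_j}) + ε` for all `y ∈ Xᵢ`. -/
theorem stmt_13 (m : ℕ) (n : Fin m → ℕ)
    (Xi : ∀ i : Fin m, Set (EuclideanSpace ℝ (Fin (n i))))
    (hclosed : ∀ i, IsClosed (Xi i)) (hconv : ∀ i, Convex ℝ (Xi i))
    (f : (∀ i : Fin m, EuclideanSpace ℝ (Fin (n i))) → ℝ)
    (hf : ContinuousOn f (Set.pi Set.univ Xi))
    (u : ∀ i : Fin m,
      EuclideanSpace ℝ (Fin (n i)) → (∀ j : Fin m, EuclideanSpace ℝ (Fin (n j))) → ℝ)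
    (hu_cont : ∀ i, ContinuousOn
      (fun p : EuclideanSpace ℝ (Fin (n i)) × (∀ j : Fin m, EuclideanSpace ℝ (Fin (n j))) =>
        u i p.1 p.2) ((Xi i) ×ˢ (Set.pi Set.univ Xi)))
    (hu_eq : ∀ i, ∀ x ∈ Set.pi Set.univ Xi, u i (x i) x = f x)
    (hu_ub : ∀ i, ∀ x ∈ Set.pi Set.univ Xi, ∀ y ∈ Xi i,
      u i y x ≥ f (Function.update x i y))
    (xs : ℕ → ∀ i : Fin m, EuclideanSpace ℝ (Fin (n i)))
    (hxs : ∀ k, xs k ∈ Set.pi Set.univ Xi)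
    (xinf : ∀ i : Fin m, EuclideanSpace ℝ (Fin (n i)))
    (hxinf : xinf ∈ Set.pi Set.univ Xi)
    (hlim : Tendsto xs atTop (nhds xinf))
    (hgap : ∀ i, ∀ ε : ℝ, 0 < ε →
      ∀ᶠ k in atTop, ∀ y ∈ Xi i, f (xs k) ≤ u i y (xs k) + ε) :
    ∀ i, ∀ y ∈ Xi i, u i (xinf i) xinf ≤ u i y xinf :=
  stmt_13_general m n Xi f hf u hu_cont hu_eq xs hxs xinf hxinf hlim hgap
end
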